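/- Given a Hom-entwining structure [(A,α),(C,γ)]_ψ, the k-module Hom^H(C,A) of morphisms f:C→A with f∘γ=α∘f is an associative unital algebra (the Koppinen smash) with unit η_A∘ε_C and ψ-twisted convolution (f*_ψ g)(c)=f(c_2)_κ g(c_1^κ). -/
import Mathlib


open TensorProduct

namespace HomPaper

variable {k : Type*} [CommRing k]
variable {A C V : Type*}
variable [AddCommGroup A] [Module k A] [AddCommGroup C] [Module k C]
variable [AddCommGroup V] [Module k V]

/-- Monoidal Hom-algebra axioms. -/
def IsHomAlgebra (α : A ≃ₗ[k] A) (mul : A →ₗ[k] A →ₗ[k] A) (one : A) : Prop :=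
  (∀ a b c, mul (α a) (mul b c) = mul (mul a b) (α c)) ∧
  (∀ a, mul a one = α a) ∧ (∀ a, mul one a = α a) ∧
  (∀ a b, α (mul a b) = mul (α a) (α b)) ∧ α one = one

/-- Monoidal Hom-coalgebra axioms. -/
def IsHomCoalgebra (γ : C ≃ₗ[k] C) (Δ : C →ₗ[k] C ⊗[k] C) (ε : C →ₗ[k] k) : Prop :=
  (∀ c, TensorProduct.map γ.symm.toLinearMap Δ (Δ c)
      = TensorProduct.assoc k C C C (TensorProduct.map Δ γ.symm.toLinearMap (Δ c))) ∧
  (∀ c, TensorProduct.lid k C (TensorProduct.map ε LinearMap.id (Δ c)) = γ.symm c) ∧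
  (∀ c, TensorProduct.rid k C (TensorProduct.map LinearMap.id ε (Δ c)) = γ.symm c) ∧
  (∀ c, Δ (γ c) = TensorProduct.map γ.toLinearMap γ.toLinearMap (Δ c)) ∧
  (∀ c, ε (γ c) = ε c)

/-- Hom-entwining structure axioms for ψ : C ⊗ A → A ⊗ C, ψ(c⊗a) = a_κ ⊗ c^κ. -/
def IsHomEntwining (α : A ≃ₗ[k] A) (γ : C ≃ₗ[k] C) (mul : A →ₗ[k] A →ₗ[k] A) (one : A)
    (Δ : C →ₗ[k] C ⊗[k] C) (ε : C →ₗ[k] k) (ψ : C ⊗[k] A →ₗ[k] A ⊗[k] C) : Prop :=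
  -- (aa')_κ ⊗ γ(c)^κ = a_κ a'_λ ⊗ γ(c^{κλ})
  (∀ c a a', ψ (γ c ⊗ₜ mul a a')
      = TensorProduct.map (TensorProduct.lift mul) γ.toLinearMap
          ((TensorProduct.assoc k A A C).symm
            (TensorProduct.map LinearMap.id ψ
              (TensorProduct.assoc k A C A (ψ (c ⊗ₜ a) ⊗ₜ a'))))) ∧
  -- α⁻¹(a_κ) ⊗ c^κ₁ ⊗ c^κ₂ = α⁻¹(a)_{κλ} ⊗ c₁^λ ⊗ c₂^κ
  (∀ c a, TensorProduct.map α.symm.toLinearMap Δ (ψ (c ⊗ₜ a))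
      = TensorProduct.assoc k A C C
          (TensorProduct.map ψ LinearMap.id
            ((TensorProduct.assoc k C A C).symm
              (TensorProduct.map LinearMap.id ψ
                (TensorProduct.assoc k C C A (Δ c ⊗ₜ α.symm a)))))) ∧
  -- 1_κ ⊗ c^κ = 1 ⊗ c
  (∀ c, ψ (c ⊗ₜ one) = one ⊗ₜ c) ∧
  -- a_κ ε(c^κ) = a ε(c)
  (∀ c a, TensorProduct.rid k A (TensorProduct.map LinearMap.id ε (ψ (c ⊗ₜ a))) = ε c • a) ∧
  -- ψ is a morphism in the Hom-category
  (∀ c a, ψ (γ c ⊗ₜ α a) = TensorProduct.map α.toLinearMap γ.toLinearMap (ψ (c ⊗ₜ a)))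

/-- The relations defining `V ⊗_A V` (on top of base relations `R₀` defining the coring
module as a quotient of `V`). -/
def corRel (R₀ : Submodule k V) (χ : V ≃ₗ[k] V)
    (lact : A →ₗ[k] V →ₗ[k] V) (ract : V →ₗ[k] A →ₗ[k] V) : Submodule k (V ⊗[k] V) :=
  Submodule.span k
    ({x | ∃ v a w, x = ract v a ⊗ₜ w - χ v ⊗ₜ lact a (χ.symm w)} ∪
     {x | ∃ r w, r ∈ R₀ ∧ (x = r ⊗ₜ w ∨ x = w ⊗ₜ r)})

/-- Induced left A-action on `V ⊗_A V` (on representatives). -/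
noncomputable def lact2 (α : A ≃ₗ[k] A) (χ : V ≃ₗ[k] V) (lact : A →ₗ[k] V →ₗ[k] V) (a : A) :
    V ⊗[k] V →ₗ[k] V ⊗[k] V :=
  TensorProduct.map (lact (α.symm a)) χ.toLinearMap

/-- Induced right A-action on `V ⊗_A V` (on representatives). -/
noncomputable def ract2 (α : A ≃ₗ[k] A) (χ : V ≃ₗ[k] V) (ract : V →ₗ[k] A →ₗ[k] V) (a : A) :
    V ⊗[k] V →ₗ[k] V ⊗[k] V :=
  TensorProduct.map χ.toLinearMap (ract.flip (α.symm a))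

/-- The relations defining `V ⊗_A (V ⊗_A V)`. -/
def corRel3 (R₀ : Submodule k V) (α : A ≃ₗ[k] A) (χ : V ≃ₗ[k] V)
    (lact : A →ₗ[k] V →ₗ[k] V) (ract : V →ₗ[k] A →ₗ[k] V) :
    Submodule k (V ⊗[k] (V ⊗[k] V)) :=
  Submodule.span k
    ({x | ∃ v a w, x = ract v a ⊗ₜ w - χ v ⊗ₜ lact2 α χ lact a w} ∪
     {x | ∃ v w, w ∈ corRel R₀ χ lact ract ∧ x = v ⊗ₜ w} ∪
     {x | ∃ r w, r ∈ R₀ ∧ x = r ⊗ₜ w})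

/-- `(V,χ)` (modulo the relations `R₀`) together with the A-bimodule structure
`lact`, `ract`, comultiplication representative `Δ` and counit `ε` is an
`(A,α)`-Hom-coring: all axioms are stated on representatives, under the quotient
projections by `R₀` resp. the tensor-relation submodules. -/
def IsHomCoring (α : A ≃ₗ[k] A) (mul : A →ₗ[k] A →ₗ[k] A) (one : A)
    (χ : V ≃ₗ[k] V) (lact : A →ₗ[k] V →ₗ[k] V) (ract : V →ₗ[k] A →ₗ[k] V)
    (R₀ : Submodule k V) (Δ : V →ₗ[k] V ⊗[k] V) (ε : V →ₗ[k] A) : Prop :=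
  -- (V,χ) is an (A,α)-Hom-bimodule
  (∀ a b v, Submodule.Quotient.mk (p := R₀) (lact (mul a b) (χ v))
      = Submodule.Quotient.mk (p := R₀) (lact (α a) (lact b v))) ∧
  (∀ v, Submodule.Quotient.mk (p := R₀) (lact one v) = Submodule.Quotient.mk (p := R₀) (χ v)) ∧
  (∀ v a b, Submodule.Quotient.mk (p := R₀) (ract (χ v) (mul a b))
      = Submodule.Quotient.mk (p := R₀) (ract (ract v a) (α b))) ∧
  (∀ v, Submodule.Quotient.mk (p := R₀) (ract v one) = Submodule.Quotient.mk (p := R₀) (χ v)) ∧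
  (∀ a v b, Submodule.Quotient.mk (p := R₀) (ract (lact a v) (α b))
      = Submodule.Quotient.mk (p := R₀) (lact (α a) (ract v b))) ∧
  (∀ a v, Submodule.Quotient.mk (p := R₀) (χ (lact a v))
      = Submodule.Quotient.mk (p := R₀) (lact (α a) (χ v))) ∧
  (∀ v a, Submodule.Quotient.mk (p := R₀) (χ (ract v a))
      = Submodule.Quotient.mk (p := R₀) (ract (χ v) (α a))) ∧
  (∀ r ∈ R₀, χ r ∈ R₀) ∧
  -- Δ and ε are well defined on the quotient by R₀
  (∀ r ∈ R₀, Submodule.Quotient.mk (p := corRel R₀ χ lact ract) (Δ r) = 0) ∧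
  (∀ r ∈ R₀, ε r = 0) ∧
  -- A-bilinearity of Δ
  (∀ a v, Submodule.Quotient.mk (p := corRel R₀ χ lact ract) (Δ (lact a v))
      = Submodule.Quotient.mk (p := corRel R₀ χ lact ract) (lact2 α χ lact a (Δ v))) ∧
  (∀ v a, Submodule.Quotient.mk (p := corRel R₀ χ lact ract) (Δ (ract v a))
      = Submodule.Quotient.mk (p := corRel R₀ χ lact ract) (ract2 α χ ract a (Δ v))) ∧
  -- A-bilinearity of ε
  (∀ a v, ε (lact a v) = mul a (ε v)) ∧
  (∀ v a, ε (ract v a) = mul (ε v) a) ∧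
  -- Hom-coassociativity: χ⁻¹(c₁) ⊗ Δ(c₂) = c₁₁ ⊗ (c₁₂ ⊗ χ⁻¹(c₂))
  (∀ v, Submodule.Quotient.mk (p := corRel3 R₀ α χ lact ract)
        (TensorProduct.map χ.symm.toLinearMap Δ (Δ v))
      = Submodule.Quotient.mk (p := corRel3 R₀ α χ lact ract)
        (TensorProduct.assoc k V V V (TensorProduct.map Δ χ.symm.toLinearMap (Δ v)))) ∧
  -- counity: ε(c₁)c₂ = c = c₁ε(c₂)
  (∀ v, Submodule.Quotient.mk (p := R₀) (TensorProduct.lift (lact ∘ₗ ε) (Δ v))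
      = Submodule.Quotient.mk (p := R₀) v) ∧
  (∀ v, Submodule.Quotient.mk (p := R₀) (TensorProduct.lift (ract.compl₂ ε) (Δ v))
      = Submodule.Quotient.mk (p := R₀) v) ∧
  -- compatibility with the twisting maps
  (∀ v, Submodule.Quotient.mk (p := corRel R₀ χ lact ract) (Δ (χ v))
      = Submodule.Quotient.mk (p := corRel R₀ χ lact ract)
        (TensorProduct.map χ.toLinearMap χ.toLinearMap (Δ v))) ∧
  (∀ v, ε (χ v) = α (ε v))

end HomPaper

namespace HomPaper

variable {k A C : Type*} [CommRing k]
variable [AddCommGroup A] [Module k A] [AddCommGroup C] [Module k C]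

/-- The ψ-twisted convolution (Koppinen) product:
`(f *_ψ g)(c) = f(c₂)_κ · g(c₁^κ)`. -/
noncomputable def koppinenMul (mul : A →ₗ[k] A →ₗ[k] A) (Δ : C →ₗ[k] C ⊗[k] C)
    (ψ : C ⊗[k] A →ₗ[k] A ⊗[k] C) (f g : C →ₗ[k] A) : C →ₗ[k] A :=
  (TensorProduct.lift mul) ∘ₗ (TensorProduct.map LinearMap.id g) ∘ₗ ψ ∘ₗ
    (TensorProduct.map LinearMap.id f) ∘ₗ Δ
section KoppinenAux

variable {k A C : Type*} [CommRing k]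
variable [AddCommGroup A] [Module k A] [AddCommGroup C] [Module k C]

private lemma komm_symm (α : A ≃ₗ[k] A) (γ : C ≃ₗ[k] C) (f : C →ₗ[k] A)
    (hf : ∀ c, f (γ c) = α (f c)) (c : C) : f (γ.symm c) = α.symm (f c) := by
  apply α.injective
  rw [α.apply_symm_apply, ← hf, γ.apply_symm_apply]

private lemma kop_closed (α : A ≃ₗ[k] A) (mul : A →ₗ[k] A →ₗ[k] A) (γ : C ≃ₗ[k] C)
    (ΔC : C →ₗ[k] C ⊗[k] C) (ψ : C ⊗[k] A →ₗ[k] A ⊗[k] C)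
    (hAα : ∀ a b, α (mul a b) = mul (α a) (α b))
    (hC4 : ∀ c, ΔC (γ c) = TensorProduct.map γ.toLinearMap γ.toLinearMap (ΔC c))
    (hψ5 : ∀ c a, ψ (γ c ⊗ₜ α a) = TensorProduct.map α.toLinearMap γ.toLinearMap (ψ (c ⊗ₜ a)))
    (f g : C →ₗ[k] A) (hf : ∀ c, f (γ c) = α (f c)) (hg : ∀ c, g (γ c) = α (g c))
    (c : C) : koppinenMul mul ΔC ψ f g (γ c) = α (koppinenMul mul ΔC ψ f g c) := by
  have inner : ∀ s : A ⊗[k] C,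
      lift mul (map LinearMap.id g (map α.toLinearMap γ.toLinearMap s))
        = α (lift mul (map LinearMap.id g s)) := by
    intro s
    induction s using TensorProduct.induction_on with
    | zero => simp
    | tmul a c => simp [hg, hAα]
    | add x y hx hy => simp [hx, hy]
  have main : ∀ t : C ⊗[k] C,
      lift mul (map LinearMap.id g (ψ (map LinearMap.id f
          (map γ.toLinearMap γ.toLinearMap t))))
        = α (lift mul (map LinearMap.id g (ψ (map LinearMap.id f t)))) := by
    intro t
    induction t using TensorProduct.induction_on with
    | zero => simp
    | tmul c₁ c₂ =>
        simp only [map_tmul, LinearMap.id_coe, id_eq, LinearEquiv.coe_coe, hf]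
        rw [hψ5]
        exact inner _
    | add x y hx hy => simp [hx, hy]
  simp only [koppinenMul, LinearMap.comp_apply, hC4]
  exact main _

private lemma kop_right_unit (α : A ≃ₗ[k] A) (mul : A →ₗ[k] A →ₗ[k] A) (one : A)
    (γ : C ≃ₗ[k] C) (ΔC : C →ₗ[k] C ⊗[k] C) (εC : C →ₗ[k] k)
    (ψ : C ⊗[k] A →ₗ[k] A ⊗[k] C)
    (hAone : ∀ a, mul a one = α a)
    (hC2 : ∀ c, TensorProduct.lid k C (map εC LinearMap.id (ΔC c)) = γ.symm c)
    (hψ4 : ∀ c a, TensorProduct.rid k A (map LinearMap.id εC (ψ (c ⊗ₜ a))) = εC c • a)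
    (f : C →ₗ[k] A) (hf : ∀ c, f (γ c) = α (f c)) :
    koppinenMul mul ΔC ψ f (εC.smulRight one) = f := by
  have step1 : ∀ s : A ⊗[k] C,
      lift mul (map LinearMap.id (εC.smulRight one) s)
        = α (TensorProduct.rid k A (map LinearMap.id εC s)) := by
    intro s
    induction s using TensorProduct.induction_on with
    | zero => simp
    | tmul a c => simp [hAone, smul_comm]
    | add x y hx hy => simp [hx, hy]
  have step2 : ∀ t : C ⊗[k] A,
      TensorProduct.rid k A (map LinearMap.id εC (ψ t))
        = TensorProduct.lid k A (map εC LinearMap.id t) := by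
    intro t
    induction t using TensorProduct.induction_on with
    | zero => simp
    | tmul c a => simp [hψ4]
    | add x y hx hy => simp [hx, hy]
  have step3 : ∀ t : C ⊗[k] C,
      TensorProduct.lid k A (map εC LinearMap.id (map LinearMap.id f t))
        = f (TensorProduct.lid k C (map εC LinearMap.id t)) := by
    intro t
    induction t using TensorProduct.induction_on with
    | zero => simp
    | tmul c₁ c₂ => simp
    | add x y hx hy => simp [hx, hy]
  ext c
  simp only [koppinenMul, LinearMap.comp_apply]
  rw [step1, step2, step3, hC2, komm_symm α γ f hf, α.apply_symm_apply]

private lemma kop_left_unit (α : A ≃ₗ[k] A) (mul : A →ₗ[k] A →ₗ[k] A) (one : A)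
    (γ : C ≃ₗ[k] C) (ΔC : C →ₗ[k] C ⊗[k] C) (εC : C →ₗ[k] k)
    (ψ : C ⊗[k] A →ₗ[k] A ⊗[k] C)
    (hAone' : ∀ a, mul one a = α a)
    (hC3 : ∀ c, TensorProduct.rid k C (map LinearMap.id εC (ΔC c)) = γ.symm c)
    (hψ3 : ∀ c, ψ (c ⊗ₜ one) = one ⊗ₜ c)
    (f : C →ₗ[k] A) (hf : ∀ c, f (γ c) = α (f c)) :
    koppinenMul mul ΔC ψ (εC.smulRight one) f = f := by
  have main : ∀ t : C ⊗[k] C,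
      lift mul (map LinearMap.id f (ψ (map LinearMap.id (εC.smulRight one) t)))
        = α (f (TensorProduct.rid k C (map LinearMap.id εC t))) := by
    intro t
    induction t using TensorProduct.induction_on with
    | zero => simp
    | tmul c₁ c₂ =>
        simp only [map_tmul, LinearMap.id_coe, id_eq, LinearMap.smulRight_apply,
          tmul_smul, map_smul, hψ3, lift.tmul, hAone', TensorProduct.rid_tmul]
    | add x y hx hy => simp [hx, hy]
  ext c
  simp only [koppinenMul, LinearMap.comp_apply]
  rw [main, hC3, komm_symm α γ f hf, α.apply_symm_apply]

end KoppinenAux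
section KoppinenAssoc

variable {k A C : Type*} [CommRing k]
variable [AddCommGroup A] [Module k A] [AddCommGroup C] [Module k C]

set_option maxHeartbeats 2000000 in
private lemma kop_assoc (α : A ≃ₗ[k] A) (mul : A →ₗ[k] A →ₗ[k] A)
    (γ : C ≃ₗ[k] C) (ΔC : C →ₗ[k] C ⊗[k] C)
    (ψ : C ⊗[k] A →ₗ[k] A ⊗[k] C)
    (hAassoc : ∀ a b c, mul (α a) (mul b c) = mul (mul a b) (α c))
    (hC1 : ∀ c, map γ.symm.toLinearMap ΔC (ΔC c)
        = TensorProduct.assoc k C C C (map ΔC γ.symm.toLinearMap (ΔC c)))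
    (hψ1 : ∀ c a a', ψ (γ c ⊗ₜ mul a a')
        = map (lift mul) γ.toLinearMap
            ((TensorProduct.assoc k A A C).symm
              (map LinearMap.id ψ
                (TensorProduct.assoc k A C A (ψ (c ⊗ₜ a) ⊗ₜ a')))))
    (hψ2 : ∀ c a, map α.symm.toLinearMap ΔC (ψ (c ⊗ₜ a))
        = TensorProduct.assoc k A C C
            (map ψ LinearMap.id
              ((TensorProduct.assoc k C A C).symm
                (map LinearMap.id ψ
                  (TensorProduct.assoc k C C A (ΔC c ⊗ₜ α.symm a))))))
    (f g h : C →ₗ[k] A) (hf : ∀ c, f (γ c) = α (f c)) (hh : ∀ c, h (γ c) = α (h c)) :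
    koppinenMul mul ΔC ψ (koppinenMul mul ΔC ψ f g) h
      = koppinenMul mul ΔC ψ f (koppinenMul mul ΔC ψ g h) := by
  -- abbreviations
  set B' : C ⊗[k] C →ₗ[k] A :=
    lift mul ∘ₗ map LinearMap.id g ∘ₗ ψ ∘ₗ map LinearMap.id f with hB'
  set B : C ⊗[k] C →ₗ[k] A :=
    lift mul ∘ₗ map LinearMap.id h ∘ₗ ψ ∘ₗ map LinearMap.id g with hB
  -- q applied to an element x ⊗ s with s : A ⊗ C, gives (mul x) ⊗ γ on s
  have hq : ∀ (x : A) (s : A ⊗[k] C),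
      map (lift mul) γ.toLinearMap ((TensorProduct.assoc k A A C).symm (x ⊗ₜ s))
        = map (mul x) γ.toLinearMap s := by
    intro x s
    induction s using TensorProduct.induction_on with
    | zero => simp
    | tmul a c => simp
    | add u v hu hv => simp [tmul_add, hu, hv]
  have key : ∀ (x : A) (s : A ⊗[k] C),
      lift mul (map LinearMap.id h (map (mul x) γ.toLinearMap s))
        = mul (α x) (lift mul (map LinearMap.id h s)) := by
    intro x s
    induction s using TensorProduct.induction_on with
    | zero => simp
    | tmul a c => simp [hh, hAassoc]
    | add u v hu hv => simp [hu, hv]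
  -- Claim C : the two final processings agree
  have claimC : ∀ z : (A ⊗[k] C) ⊗[k] C,
      lift mul (map LinearMap.id h (map (lift mul) γ.toLinearMap
        ((TensorProduct.assoc k A A C).symm (map LinearMap.id ψ
          (TensorProduct.assoc k A C A (map LinearMap.id g z))))))
      = lift mul (map α.toLinearMap B (TensorProduct.assoc k A C C z)) := by
    intro z
    induction z using TensorProduct.induction_on with
    | zero => simp
    | tmul p v =>
        induction p using TensorProduct.induction_on with
        | zero => simp
        | tmul x y =>
            simp only [map_tmul, LinearMap.id_coe, id_eq, assoc_tmul, hB,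
              LinearMap.comp_apply, lift.tmul]
            rw [hq, key]
            rfl
        | add u w hu hw =>
            simp only [map_tmul, LinearMap.id_coe, id_eq] at hu hw
            simp [add_tmul, hu, hw]
    | add u w hu hw => simp [hu, hw]
  -- Ψ₁ : lifted first entwining axiom
  have psi1 : ∀ (d : C) (w : A ⊗[k] A),
      ψ (γ d ⊗ₜ lift mul w)
        = map (lift mul) γ.toLinearMap
            ((TensorProduct.assoc k A A C).symm (map LinearMap.id ψ
              (TensorProduct.assoc k A C A (map ψ LinearMap.id
                ((TensorProduct.assoc k C A A).symm (d ⊗ₜ w)))))) := by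
    intro d w
    induction w using TensorProduct.induction_on with
    | zero => simp [tmul_zero]
    | tmul a a' =>
        simpa only [assoc_symm_tmul, map_tmul, LinearMap.id_coe, id_eq, lift.tmul]
          using hψ1 d a a'
    | add u v hu hv => simp [tmul_add, hu, hv]
  -- B-side (left-hand side) chain
  have e1 : ∀ t : C ⊗[k] C,
      map LinearMap.id (koppinenMul mul ΔC ψ f g) t
        = map γ.toLinearMap B' (map γ.symm.toLinearMap ΔC t) := by
    intro t
    induction t using TensorProduct.induction_on with
    | zero => simp
    | tmul c₁ c₂ => simp [koppinenMul, hB', LinearMap.comp_apply]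
    | add u v hu hv => simp [hu, hv]
  have e2 : ∀ s : C ⊗[k] (C ⊗[k] C),
      ψ (map γ.toLinearMap B' s)
        = map (lift mul) γ.toLinearMap
            ((TensorProduct.assoc k A A C).symm (map LinearMap.id ψ
              (TensorProduct.assoc k A C A (map ψ LinearMap.id
                ((TensorProduct.assoc k C A A).symm
                  (map LinearMap.id (map LinearMap.id g ∘ₗ ψ ∘ₗ map LinearMap.id f) s)))))) := by
    intro s
    induction s using TensorProduct.induction_on with
    | zero => simp
    | tmul d u =>
        simp only [map_tmul, LinearMap.id_coe, id_eq, LinearEquiv.coe_coe, hB',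
          LinearMap.comp_apply]
        exact psi1 d _
    | add u v hu hv => simp [hu, hv]
  have e3 : ∀ (d : C) (v : A ⊗[k] C),
      map ψ LinearMap.id ((TensorProduct.assoc k C A A).symm (d ⊗ₜ map LinearMap.id g v))
        = map LinearMap.id g (map ψ LinearMap.id
            ((TensorProduct.assoc k C A C).symm (d ⊗ₜ v))) := by
    intro d v
    induction v using TensorProduct.induction_on with
    | zero => simp [tmul_zero]
    | tmul a c => simp
    | add u v hu hv => simp [tmul_add, hu, hv]
  have e3' : ∀ s : C ⊗[k] (C ⊗[k] C),
      map ψ LinearMap.id ((TensorProduct.assoc k C A A).symm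
          (map LinearMap.id (map LinearMap.id g ∘ₗ ψ ∘ₗ map LinearMap.id f) s))
        = map LinearMap.id g (map ψ LinearMap.id ((TensorProduct.assoc k C A C).symm
            (map LinearMap.id (ψ ∘ₗ map LinearMap.id f) s))) := by
    intro s
    induction s using TensorProduct.induction_on with
    | zero => simp
    | tmul d u =>
        simp only [map_tmul, LinearMap.id_coe, id_eq, LinearMap.comp_apply]
        exact e3 d _
    | add u v hu hv => simp [hu, hv]
  -- A-side (right-hand side) chain
  have a1 : ∀ t : A ⊗[k] C,
      map LinearMap.id (koppinenMul mul ΔC ψ g h) t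
        = map α.toLinearMap B (map α.symm.toLinearMap ΔC t) := by
    intro t
    induction t using TensorProduct.induction_on with
    | zero => simp
    | tmul a c => simp [koppinenMul, hB, LinearMap.comp_apply]
    | add u v hu hv => simp [hu, hv]
  have a2 : ∀ t : C ⊗[k] A,
      map α.symm.toLinearMap ΔC (ψ t)
        = TensorProduct.assoc k A C C (map ψ LinearMap.id
            ((TensorProduct.assoc k C A C).symm (map LinearMap.id ψ
              (TensorProduct.assoc k C C A (map ΔC α.symm.toLinearMap t))))) := by
    intro t
    induction t using TensorProduct.induction_on with
    | zero => simp
    | tmul c a => simpa using hψ2 c a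
    | add u v hu hv => simp [hu, hv]
  have a4 : ∀ (p : C ⊗[k] C) (c₂ : C),
      map LinearMap.id ψ (TensorProduct.assoc k C C A (p ⊗ₜ α.symm (f c₂)))
        = map LinearMap.id (ψ ∘ₗ map LinearMap.id f)
            (TensorProduct.assoc k C C C (p ⊗ₜ γ.symm c₂)) := by
    intro p c₂
    induction p using TensorProduct.induction_on with
    | zero => simp
    | tmul c₁₁ c₁₂ => simp [komm_symm α γ f hf]
    | add u v hu hv => simp [add_tmul, hu, hv]
  have a4' : ∀ t : C ⊗[k] C,
      map LinearMap.id ψ (TensorProduct.assoc k C C A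
          (map ΔC α.symm.toLinearMap (map LinearMap.id f t)))
        = map LinearMap.id (ψ ∘ₗ map LinearMap.id f)
            (TensorProduct.assoc k C C C (map ΔC γ.symm.toLinearMap t)) := by
    intro t
    induction t using TensorProduct.induction_on with
    | zero => simp
    | tmul c₁ c₂ => simpa using a4 (ΔC c₁) c₂
    | add u v hu hv => simp [hu, hv]
  -- assemble
  ext c
  show lift mul (map LinearMap.id h (ψ (map LinearMap.id (koppinenMul mul ΔC ψ f g) (ΔC c))))
      = lift mul (map LinearMap.id (koppinenMul mul ΔC ψ g h) (ψ (map LinearMap.id f (ΔC c))))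
  rw [e1 (ΔC c), hC1 c, e2, e3', a1, a2, a4']
  exact claimC _

end KoppinenAssoc

/-- Given a Hom-entwining structure `[(A,α),(C,γ)]_ψ`, the k-module
`Hom^H(C,A)` of morphisms `f : C → A` with `f∘γ = α∘f` is an associative unital
algebra (the Koppinen smash), with unit `η_A ∘ ε_C` and the ψ-twisted convolution
`(f *_ψ g)(c) = f(c₂)_κ g(c₁^κ)`. -/
theorem koppinen_smash_algebra
    (α : A ≃ₗ[k] A) (mul : A →ₗ[k] A →ₗ[k] A) (one : A)
    (γ : C ≃ₗ[k] C) (ΔC : C →ₗ[k] C ⊗[k] C) (εC : C →ₗ[k] k)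
    (ψ : C ⊗[k] A →ₗ[k] A ⊗[k] C)
    (hA : IsHomAlgebra α mul one) (hC : IsHomCoalgebra γ ΔC εC)
    (hψ : IsHomEntwining α γ mul one ΔC εC ψ) :
    -- closure under the product and membership of the unit
    (∀ f g : C →ₗ[k] A, (∀ c, f (γ c) = α (f c)) → (∀ c, g (γ c) = α (g c)) →
        ∀ c, (koppinenMul mul ΔC ψ f g) (γ c) = α ((koppinenMul mul ΔC ψ f g) c)) ∧
    (∀ c, (εC.smulRight one) (γ c) = α ((εC.smulRight one) c)) ∧
    -- associativity
    (∀ f g h : C →ₗ[k] A, (∀ c, f (γ c) = α (f c)) → (∀ c, g (γ c) = α (g c)) →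
        (∀ c, h (γ c) = α (h c)) →
        koppinenMul mul ΔC ψ (koppinenMul mul ΔC ψ f g) h
          = koppinenMul mul ΔC ψ f (koppinenMul mul ΔC ψ g h)) ∧
    -- unit laws
    (∀ f : C →ₗ[k] A, (∀ c, f (γ c) = α (f c)) →
        koppinenMul mul ΔC ψ f (εC.smulRight one) = f) ∧
    (∀ f : C →ₗ[k] A, (∀ c, f (γ c) = α (f c)) →
        koppinenMul mul ΔC ψ (εC.smulRight one) f = f) := by
  obtain ⟨hAassoc, hAone, hAone', hAα, hAαone⟩ := hA
  obtain ⟨hC1, hC2, hC3, hC4, hC5⟩ := hC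
  obtain ⟨hψ1, hψ2, hψ3, hψ4, hψ5⟩ := hψ
  refine ⟨?_, ?_, ?_, ?_, ?_⟩
  · intro f g hf hg c
    exact kop_closed α mul γ ΔC ψ hAα hC4 hψ5 f g hf hg c
  · intro c
    simp [LinearMap.smulRight_apply, hC5, hAαone]
  · intro f g h hf hg hh
    exact kop_assoc α mul γ ΔC ψ hAassoc hC1 hψ1 hψ2 f g h hf hh
  · intro f hf
    exact kop_right_unit α mul one γ ΔC εC ψ hAone hC2 hψ4 f hf
  · intro f hf
    exact kop_left_unit α mul one γ ΔC εC ψ hAone' hC3 hψ3 f hf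

end HomPaper
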